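/- (Theorem 4.6, lower bound) Let k > 0, let p ∈ ℝ³ with p ≠ 0, let Ω ⊂ ℝ³ be a bounded measurable set of positive Lebesgue measure, and let T be a bounded linear operator on L²(Ω,ℂ³) such that |⟨Th,h⟩| ≥ c‖h‖² for some c > 0 and all h in the L²-closure of H(L²_t(S²)). Suppose y ∈ ℝ³ is such that there exists ψ ∈ L²(Ω,ℂ³), ψ ≠ 0, with φ_y(d) = d × (∫_Ω ψ(x) e^{−ik x·d} dx) × d for σ-a.e. d ∈ S². Then the DSM imaging functional satisfies I_DSM(y) ≥ c ‖φ_y‖⁴_{L²(S²,ℂ³)} / ‖ψ‖²_{L²(Ω,ℂ³)}, and this lower bound is strictly positive. -/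

import Mathlib

open MeasureTheory Metric Complex

noncomputable section

abbrev R3 : Type := EuclideanSpace ℝ (Fin 3)
abbrev C3 : Type := EuclideanSpace ℂ (Fin 3)
abbrev S2 : Type := Metric.sphere (0 : R3) 1

/-- The surface measure on the unit sphere `S²` (total mass `4π`). -/
def σS : Measure S2 := (volume : Measure R3).toSphere

/-- Componentwise complexification of a real vector. -/
def cm (x : R3) : C3 := WithLp.toLp 2 (fun i => (x i : ℂ))

/-- Real dot product on `ℝ³`. -/
def dotR (a b : R3) : ℝ := ∑ i, a i * b i

/-- Bilinear (unconjugated) dot product on `ℂ³`. -/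
def dotc (a b : C3) : ℂ := ∑ i, a i * b i

/-- Cross product on `ℂ³`, extended bilinearly. -/
def crossc (a b : C3) : C3 := WithLp.toLp 2 (crossProduct a b)

/-- Hermitian pairing `a · conj b`. -/
def hdot (a b : C3) : ℂ := ∑ i, a i * (starRingEnd ℂ) (b i)

/-- The test function `φ_y(d) = (d×p)×d e^{−ik d·y}`. -/
def phiy (k : ℝ) (p y : R3) (d : S2) : C3 :=
  Complex.exp (-(Complex.I * k * (dotR (d : R3) y))) •
    crossc (crossc (cm (d : R3)) (cm p)) (cm (d : R3))

/-- The Herglotz wave function `(Hg)(x) = ∫_{S²} g(d) e^{ik x·d} dσ(d)`. -/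
def herg (k : ℝ) (g : S2 → C3) (x : R3) : C3 :=
  ∫ d : S2, Complex.exp (Complex.I * k * (dotR x (d : R3))) • g d ∂σS

open Classical in
/-- The `L²` class of a function (`0` if the function is not square integrable). -/
def toL2 {α : Type} [MeasurableSpace α] (μ : Measure α) (f : α → C3) : Lp C3 2 μ :=
  if h : MemLp f 2 μ then h.toLp f else 0

/-- `(H^*f)(d) = d × (∫_Ω f(x) e^{−ik x·d} dx) × d`. -/
def hergSt (k : ℝ) (Ω : Set R3) (f : R3 → C3) (d : S2) : C3 :=
  crossc (crossc (cm (d : R3))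
    (∫ x in Ω, Complex.exp (-(Complex.I * k * (dotR x (d : R3)))) • f x)) (cm (d : R3))

/-- The operator `F` built from the factorization `F = H^* T H`:
`(Fg)(d) = d × (∫_Ω (T(Hg))(x) e^{−ik x·d} dx) × d`. -/
def Fop (k : ℝ) (Ω : Set R3)
    (T : Lp C3 2 (volume.restrict Ω) →L[ℂ] Lp C3 2 (volume.restrict Ω))
    (g : S2 → C3) (d : S2) : C3 :=
  crossc (crossc (cm (d : R3))
    (∫ x in Ω, Complex.exp (-(Complex.I * k * (dotR x (d : R3)))) •
      (T (toL2 (volume.restrict Ω) (herg k g))) x)) (cm (d : R3))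

/-- The OSM imaging functional `I_OSM(y) = ∫_{S²} |p·(Fφ_y)(x̂)|² dσ(x̂)`. -/
def IOSM (k : ℝ) (Ω : Set R3)
    (T : Lp C3 2 (volume.restrict Ω) →L[ℂ] Lp C3 2 (volume.restrict Ω))
    (p y : R3) : ℝ :=
  ∫ xh : S2, ‖dotc (cm p) (Fop k Ω T (phiy k p y) xh)‖ ^ 2 ∂σS

/-- The DSM imaging functional `I_DSM(y) = |⟨Fφ_y, φ_y⟩_{L²(S²)}|`. -/
def IDSM (k : ℝ) (Ω : Set R3)
    (T : Lp C3 2 (volume.restrict Ω) →L[ℂ] Lp C3 2 (volume.restrict Ω))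
    (p y : R3) : ℝ :=
  ‖∫ d : S2, hdot (Fop k Ω T (phiy k p y) d) (phiy k p y d) ∂σS‖

/-- The set `H(L²_t(S²)) ⊂ L²(Ω,ℂ³)`: images under the Herglotz operator of square
integrable tangential fields. -/
def ranHt (k : ℝ) (Ω : Set R3) : Set (Lp C3 2 (volume.restrict Ω)) :=
  {h | ∃ g : S2 → C3, MemLp g 2 σS ∧ (∀ᵐ (d : S2) ∂σS, dotc (cm d.val) (g d) = 0) ∧
    h = toL2 (volume.restrict Ω) (herg k g)}

/-! With `h = H φ_y`, the factorization `F = H^* T H` and the tangentiality of `φ_y` give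
`⟨Fφ_y, φ_y⟩ = ⟨h, T h⟩`, while `φ_y = H^* ψ` gives `‖φ_y‖² = ⟨h, ψ⟩ ≤ ‖h‖ ‖ψ‖`; both are the
Fubini identity `⟨H^* f, g⟩ = ⟨f, H g⟩` for tangential `g`. Coercivity of `T` on the range of `H`
then yields `I_DSM(y) ≥ c ‖h‖² ≥ c ‖φ_y‖⁴ / ‖ψ‖²`. The bound is positive because `φ_y` is
continuous and does not vanish at a unit vector orthogonal to `p`. -/

open scoped InnerProductSpace ComplexConjugate

lemma integral_inner_left {α 𝕜 E : Type*} [MeasurableSpace α] {μ : Measure α} [RCLike 𝕜]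
    [NormedAddCommGroup E] [InnerProductSpace 𝕜 E] [CompleteSpace E] [NormedSpace ℝ E]
    {f : α → E} (hf : Integrable f μ) (c : E) :
    ∫ x, ⟪f x, c⟫_𝕜 ∂μ = ⟪∫ x, f x ∂μ, c⟫_𝕜 := by
  calc ∫ x, ⟪f x, c⟫_𝕜 ∂μ = ∫ x, conj ⟪c, f x⟫_𝕜 ∂μ := by simp only [inner_conj_symm]
    _ = conj ⟪c, ∫ x, f x ∂μ⟫_𝕜 := by rw [integral_conj, integral_inner hf]
    _ = ⟪∫ x, f x ∂μ, c⟫_𝕜 := inner_conj_symm _ _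

lemma sq_norm_inner_div_sq_norm_le {𝕜 E : Type*} [RCLike 𝕜] [NormedAddCommGroup E]
    [InnerProductSpace 𝕜 E] (h ψ : E) : ‖⟪h, ψ⟫_𝕜‖ ^ 2 / ‖ψ‖ ^ 2 ≤ ‖h‖ ^ 2 := by
  rcases eq_or_ne ψ 0 with rfl | hψ
  · simp
  rw [div_le_iff₀ (by positivity), ← mul_pow]
  gcongr
  exact norm_inner_le_norm h ψ

lemma exists_norm_eq_one_inner_eq_zero {E : Type*} [NormedAddCommGroup E]
    [InnerProductSpace ℝ E] [FiniteDimensional ℝ E] (hE : 2 ≤ Module.finrank ℝ E) (p : E) :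
    ∃ d : E, ‖d‖ = 1 ∧ ⟪d, p⟫_ℝ = 0 := by
  have hrank := (ℝ ∙ p).finrank_add_finrank_orthogonal
  have hspan : Module.finrank ℝ (ℝ ∙ p) ≤ 1 := by
    simpa using finrank_span_le_card ({p} : Set E)
  obtain ⟨v, hv, hv0⟩ := Submodule.exists_mem_ne_zero_of_ne_bot (p := (ℝ ∙ p)ᗮ) <| by
    intro hbot
    rw [hbot, finrank_bot] at hrank
    omega
  refine ⟨‖v‖⁻¹ • v, by simp [norm_smul, hv0], ?_⟩
  rw [real_inner_smul_left, real_inner_comm,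
    Submodule.mem_orthogonal_singleton_iff_inner_right.mp hv, mul_zero]

section VectorAlgebra

lemma dotR_eq_inner (a b : R3) : dotR a b = ⟪a, b⟫_ℝ := by
  simp [dotR, PiLp.inner_apply, mul_comm]

@[fun_prop]
lemma continuous_cm : Continuous cm := by
  unfold cm; fun_prop

@[fun_prop]
lemma Continuous.dotR {α : Type*} [TopologicalSpace α] {f g : α → R3} (hf : Continuous f)
    (hg : Continuous g) : Continuous fun a => dotR (f a) (g a) := by
  simp only [dotR_eq_inner]; fun_prop

lemma dotc_cm_cm (a b : R3) : dotc (cm a) (cm b) = dotR a b := by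
  simp [dotc, dotR, cm]

lemma hdot_eq_inner (a b : C3) : hdot a b = ⟪b, a⟫_ℂ := by
  simp [hdot, PiLp.inner_apply, RCLike.inner_apply]

lemma hdot_self (a : C3) : hdot a a = (‖a‖ ^ 2 : ℝ) := by
  rw [hdot_eq_inner, inner_self_eq_norm_sq_to_K]
  norm_cast

lemma hdot_cm (a : R3) (v : C3) : hdot (cm a) v = conj (dotc (cm a) v) := by
  simp [hdot, dotc, cm]

lemma crossc_crossc_self (a A : C3) :
    crossc (crossc a A) a = dotc a a • A - dotc a A • a := by
  ext i
  simp [crossc, dotc, cross_cross_eq_smul_sub_smul, dotProduct, mul_comm]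

lemma dotc_crossc_self (a A : C3) : dotc a (crossc A a) = 0 :=
  dot_cross_self A.ofLp a.ofLp

lemma dotR_self_of_mem_sphere (d : S2) : dotR d d = 1 := by
  simp [dotR_eq_inner]

lemma crossc_crossc_cm_of_mem_sphere (d : S2) (A : C3) :
    crossc (crossc (cm d) A) (cm d) = A - dotc (cm d) A • cm d := by
  rw [crossc_crossc_self, dotc_cm_cm, dotR_self_of_mem_sphere]
  simp

lemma hdot_crossc_crossc_cm_of_tangent (d : S2) (A : C3) {v : C3} (hv : dotc (cm d) v = 0) :
    hdot (crossc (crossc (cm d) A) (cm d)) v = hdot A v := by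
  rw [crossc_crossc_cm_of_mem_sphere, hdot_eq_inner, hdot_eq_inner, inner_sub_right,
    inner_smul_right, ← hdot_eq_inner (cm d), hdot_cm, hv]
  simp

end VectorAlgebra

@[simp]
lemma norm_exp_I_mul_ofReal_mul_ofReal (k t : ℝ) : ‖Complex.exp (I * k * t)‖ = 1 := by
  simp [Complex.norm_exp]

@[simp]
lemma norm_exp_neg_I_mul_ofReal_mul_ofReal (k t : ℝ) : ‖Complex.exp (-(I * k * t))‖ = 1 := by
  simp [Complex.norm_exp]

lemma conj_exp_I_mul_ofReal_mul_ofReal (k t : ℝ) :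
    conj (Complex.exp (I * k * t)) = Complex.exp (-(I * k * t)) := by
  rw [← Complex.exp_conj]
  simp

instance : IsFiniteMeasure σS := inferInstanceAs (IsFiniteMeasure (volume : Measure R3).toSphere)

instance : σS.IsOpenPosMeasure := inferInstanceAs (volume : Measure R3).toSphere.IsOpenPosMeasure

section TestField

variable (k : ℝ) (p y : R3)

lemma phiy_eq (d : S2) :
    phiy k p y d = Complex.exp (-(I * k * dotR d y)) • (cm p - (dotR d p : ℂ) • cm d) := by
  rw [phiy, crossc_crossc_cm_of_mem_sphere, dotc_cm_cm]

lemma dotc_phiy (d : S2) : dotc (cm d) (phiy k p y d) = 0 := by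
  simp only [phiy, dotc, PiLp.smul_apply, smul_eq_mul, mul_left_comm _ (Complex.exp _),
    ← Finset.mul_sum]
  exact mul_eq_zero_of_right _ (dotc_crossc_self _ _)

lemma continuous_phiy : Continuous (phiy k p y) := by
  simp only [funext (phiy_eq k p y)]
  fun_prop

lemma phiy_ne_zero_of_inner_eq_zero (hp : p ≠ 0) {d : S2} (hd : ⟪(d : R3), p⟫_ℝ = 0) :
    phiy k p y d ≠ 0 := by
  have hcm : cm p ≠ 0 := fun h => hp (by ext i; simpa [cm] using congrArg (· i) h)
  simpa [phiy_eq, dotR_eq_inner, hd] using hcm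

lemma integral_norm_sq_phiy_pos (hp : p ≠ 0) : 0 < ∫ d, ‖phiy k p y d‖ ^ 2 ∂σS := by
  obtain ⟨d, hd1, hd⟩ := exists_norm_eq_one_inner_eq_zero (by simp) p
  refine ((continuous_phiy k p y).norm.pow 2).integral_pos_of_hasCompactSupport_nonneg_nonzero
    (x := ⟨d, by simpa using hd1⟩) (.of_compactSpace _) (fun _ => by positivity) ?_
  simpa using phiy_ne_zero_of_inner_eq_zero k p y hp hd

end TestField

section Herglotz

variable {k : ℝ} {g : S2 → C3}

lemma norm_herg_le (x : R3) : ‖herg k g x‖ ≤ ∫ d, ‖g d‖ ∂σS :=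
  (norm_integral_le_integral_norm _).trans_eq (by simp [norm_smul])

lemma continuous_herg (hg : Integrable g σS) : Continuous (herg k g) := by
  refine continuous_of_dominated (bound := fun d => ‖g d‖) (fun x => ?_)
    (fun x => .of_forall fun d => by simp [norm_smul]) hg.norm (.of_forall fun d => ?_)
  · have : Continuous fun d : S2 => Complex.exp (I * k * dotR x d) := by fun_prop
    exact this.aestronglyMeasurable.smul hg.1
  · fun_prop

lemma memLp_herg (μ : Measure R3) [IsFiniteMeasure μ] (hg : Integrable g σS) :
    MemLp (herg k g) 2 μ :=
  .of_bound (continuous_herg hg).aestronglyMeasurable _ (.of_forall norm_herg_le)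

/-- The projection in `H^*` is invisible against the tangential field `g`; the rest is Fubini. -/
lemma integral_hdot_hergSt_eq_integral_inner_herg {Ω : Set R3} (hg : Integrable g σS)
    (htan : ∀ᵐ (d : S2) ∂σS, dotc (cm d) (g d) = 0) {f : R3 → C3}
    (hf : Integrable f (volume.restrict Ω)) :
    ∫ d, hdot (hergSt k Ω f d) (g d) ∂σS = ∫ x in Ω, ⟪herg k g x, f x⟫_ℂ := by
  have hkernel : Continuous fun z : S2 × R3 => Complex.exp (I * k * dotR z.2 z.1) := by fun_prop
  calc ∫ d, hdot (hergSt k Ω f d) (g d) ∂σS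
      = ∫ d, (∫ x in Ω, ⟪Complex.exp (I * k * dotR x d) • g d, f x⟫_ℂ) ∂σS := by
        refine integral_congr_ae (htan.mono fun d hd => ?_)
        have hint : Integrable (fun x => Complex.exp (-(I * k * dotR x d)) • f x)
            (volume.restrict Ω) :=
          have : Continuous fun x : R3 => Complex.exp (-(I * k * dotR x d)) := by fun_prop
          hf.bdd_smul 1 this.aestronglyMeasurable (.of_forall fun x => by simp)
        dsimp only [hergSt]
        rw [hdot_crossc_crossc_cm_of_tangent d _ hd, hdot_eq_inner, ← integral_inner hint]
        simp only [inner_smul_left, inner_smul_right, conj_exp_I_mul_ofReal_mul_ofReal]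
    _ = ∫ x in Ω, (∫ d, ⟪Complex.exp (I * k * dotR x d) • g d, f x⟫_ℂ ∂σS) := by
        refine integral_integral_swap
          ((hg.norm.mul_prod hf.norm).mono' ?_ (.of_forall fun ⟨d, x⟩ => ?_))
        · exact ((hkernel.aestronglyMeasurable.smul hg.1.comp_fst).inner hf.1.comp_snd)
        · simp only [Function.uncurry_apply_pair, inner_smul_left, norm_mul, RCLike.norm_conj,
            norm_exp_I_mul_ofReal_mul_ofReal, one_mul]
          exact norm_inner_le_norm (g d) (f x)
    _ = ∫ x in Ω, ⟪herg k g x, f x⟫_ℂ := by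
        refine integral_congr_ae (.of_forall fun x => integral_inner_left ?_ _)
        exact hg.bdd_smul 1 (hkernel.comp (Continuous.prodMk_left x)).aestronglyMeasurable
          (.of_forall fun d => by simp)

end Herglotz

section L2

variable {α : Type} [MeasurableSpace α] {μ : Measure α} {f : α → C3}

lemma coeFn_toL2 (hf : MemLp f 2 μ) : toL2 μ f =ᵐ[μ] f := by
  rw [toL2, dif_pos hf]
  exact hf.coeFn_toLp

lemma inner_toL2 (hf : MemLp f 2 μ) (u : Lp C3 2 μ) :
    ⟪toL2 μ f, u⟫_ℂ = ∫ x, ⟪f x, u x⟫_ℂ ∂μ := by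
  rw [L2.inner_def]
  exact integral_congr_ae ((coeFn_toL2 hf).mono fun x hx => congrArg (⟪·, u x⟫_ℂ) hx)

lemma sq_norm_toLp (hf : MemLp f 2 μ) : ‖hf.toLp f‖ ^ 2 = ∫ x, ‖f x‖ ^ 2 ∂μ := by
  have h : ⟪hf.toLp f, hf.toLp f⟫_ℂ = ((∫ x, ‖f x‖ ^ 2 ∂μ : ℝ) : ℂ) := by
    rw [L2.inner_def, ← integral_complex_ofReal]
    refine integral_congr_ae (hf.coeFn_toLp.mono fun x hx => ?_)
    dsimp only
    rw [hx, ← hdot_eq_inner, hdot_self]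
  rw [← inner_self_eq_norm_sq (𝕜 := ℂ), h]
  rfl

end L2

theorem stmt4_general (k : ℝ) (p : R3) (hp : p ≠ 0) (Ω : Set R3)
    (hΩbdd : Bornology.IsBounded Ω)
    (T : Lp C3 2 (volume.restrict Ω) →L[ℂ] Lp C3 2 (volume.restrict Ω))
    (c : ℝ) (hc : 0 < c)
    (hcoer : ∀ h ∈ closure (ranHt k Ω), c * ‖h‖ ^ 2 ≤ ‖(inner ℂ (T h) h : ℂ)‖)
    (y : R3) (ψ : R3 → C3) (hψ : MemLp ψ 2 (volume.restrict Ω))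
    (hψ0 : ¬ ψ =ᵐ[volume.restrict Ω] (0 : R3 → C3))
    (hrange : ∀ᵐ (d : S2) ∂σS, phiy k p y d = hergSt k Ω ψ d) :
    0 < c * (∫ d : S2, ‖phiy k p y d‖ ^ 2 ∂σS) ^ 2 / (∫ x in Ω, ‖ψ x‖ ^ 2) ∧
      c * (∫ d : S2, ‖phiy k p y d‖ ^ 2 ∂σS) ^ 2 / (∫ x in Ω, ‖ψ x‖ ^ 2) ≤
        IDSM k Ω T p y := by
  have : IsFiniteMeasure (volume.restrict Ω) :=
    isFiniteMeasure_restrict.mpr hΩbdd.measure_lt_top.ne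
  set φ := phiy k p y
  have hφL2 : MemLp φ 2 σS :=
    (continuous_phiy k p y).memLp_of_hasCompactSupport (.of_compactSpace _)
  have hφ : Integrable φ σS := hφL2.integrable one_le_two
  have hφtan : ∀ᵐ (d : S2) ∂σS, dotc (cm d) (φ d) = 0 := .of_forall (dotc_phiy k p y)
  have hHφ : MemLp (herg k φ) 2 (volume.restrict Ω) := memLp_herg _ hφ
  set h := toL2 (volume.restrict Ω) (herg k φ)
  set Ψ := hψ.toLp ψ
  have hIDSM : IDSM k Ω T p y = ‖⟪T h, h⟫_ℂ‖ := by
    rw [norm_inner_symm, inner_toL2 hHφ, ← integral_hdot_hergSt_eq_integral_inner_herg hφ hφtan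
      ((Lp.memLp (T h)).integrable one_le_two)]
    rfl
  have hhΨ : ⟪h, Ψ⟫_ℂ = ((∫ d, ‖φ d‖ ^ 2 ∂σS : ℝ) : ℂ) := by
    rw [inner_toL2 hHφ, integral_congr_ae (hψ.coeFn_toLp.mono fun x hx => by rw [hx]),
      ← integral_hdot_hergSt_eq_integral_inner_herg hφ hφtan (hψ.integrable one_le_two),
      ← integral_complex_ofReal]
    exact integral_congr_ae (hrange.mono fun d hd => by dsimp only; rw [← hd, hdot_self])
  have hΨ : Ψ ≠ 0 := fun h0 => hψ0 <|
    (MemLp.toLp_eq_toLp_iff hψ MemLp.zero).mp (h0.trans (MemLp.toLp_zero _).symm)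
  have hψpos : 0 < ∫ x in Ω, ‖ψ x‖ ^ 2 := by
    rw [← sq_norm_toLp hψ]
    exact pow_pos (norm_pos_iff.mpr hΨ) 2
  have hφpos := integral_norm_sq_phiy_pos k p y hp
  refine ⟨by positivity, ?_⟩
  calc c * (∫ d, ‖φ d‖ ^ 2 ∂σS) ^ 2 / (∫ x in Ω, ‖ψ x‖ ^ 2)
      = c * (‖⟪h, Ψ⟫_ℂ‖ ^ 2 / ‖Ψ‖ ^ 2) := by
        rw [hhΨ, Complex.norm_real, Real.norm_of_nonneg hφpos.le, sq_norm_toLp hψ, mul_div_assoc]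
    _ ≤ c * ‖h‖ ^ 2 := by gcongr; exact sq_norm_inner_div_sq_norm_le h Ψ
    _ ≤ ‖⟪T h, h⟫_ℂ‖ := hcoer h (subset_closure ⟨φ, hφL2, hφtan, rfl⟩)
    _ = IDSM k Ω T p y := hIDSM.symm

/-- **Theorem 4.6 (lower bound).** -/
theorem stmt4 (k : ℝ) (hk : 0 < k) (p : R3) (hp : p ≠ 0) (Ω : Set R3)
    (hΩmeas : MeasurableSet Ω) (hΩbdd : Bornology.IsBounded Ω) (hΩpos : 0 < volume Ω)
    (T : Lp C3 2 (volume.restrict Ω) →L[ℂ] Lp C3 2 (volume.restrict Ω))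
    (c : ℝ) (hc : 0 < c)
    (hcoer : ∀ h ∈ closure (ranHt k Ω), c * ‖h‖ ^ 2 ≤ ‖(inner ℂ (T h) h : ℂ)‖)
    (y : R3) (ψ : R3 → C3) (hψ : MemLp ψ 2 (volume.restrict Ω))
    (hψ0 : ¬ ψ =ᵐ[volume.restrict Ω] (0 : R3 → C3))
    (hrange : ∀ᵐ (d : S2) ∂σS, phiy k p y d = hergSt k Ω ψ d) :
    0 < c * (∫ d : S2, ‖phiy k p y d‖ ^ 2 ∂σS) ^ 2 / (∫ x in Ω, ‖ψ x‖ ^ 2) ∧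
      c * (∫ d : S2, ‖phiy k p y d‖ ^ 2 ∂σS) ^ 2 / (∫ x in Ω, ‖ψ x‖ ^ 2) ≤
        IDSM k Ω T p y :=
  stmt4_general k p hp Ω hΩbdd T c hc hcoer y ψ hψ hψ0 hrange
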